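/- The Thue–Morse sequence t : ℕ → Bool, defined by letting t n be the parity of the number of 1-digits in the binary expansion of n, is cube-free: for every i : ℕ and every n ≥ 1 there exists k < 2 * n with t (i + k) ≠ t (i + n + k). -/
import Mathlib


/-- The Thue–Morse sequence: `thueMorse n` is the parity of the number of `1`-digits
in the binary expansion of `n`. -/
def thueMorse (n : ℕ) : Bool := (Nat.digits 2 n).count 1 % 2 == 1

lemma tm_count_two_mul (n : ℕ) :
    ((Nat.digits 2 (2 * n)).count 1) = (Nat.digits 2 n).count 1 := by
  rcases Nat.eq_zero_or_pos n with h | h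
  · simp [h]
  · rw [Nat.digits_def' (by norm_num : 1 < 2) (by omega)]
    rw [show 2 * n % 2 = 0 by omega, show 2 * n / 2 = n by omega]
    simp [List.count_cons]

lemma tm_count_two_mul_add_one (n : ℕ) :
    ((Nat.digits 2 (2 * n + 1)).count 1) = (Nat.digits 2 n).count 1 + 1 := by
  rw [Nat.digits_def' (by norm_num : 1 < 2) (by omega)]
  rw [show (2 * n + 1) % 2 = 1 by omega, show (2 * n + 1) / 2 = n by omega]
  simp [List.count_cons]

lemma tm_even (n : ℕ) : thueMorse (2 * n) = thueMorse n := by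
  unfold thueMorse
  rw [tm_count_two_mul]

lemma tm_odd (n : ℕ) : thueMorse (2 * n + 1) = !thueMorse n := by
  unfold thueMorse
  rw [tm_count_two_mul_add_one]
  rcases Nat.mod_two_eq_zero_or_one ((Nat.digits 2 n).count 1) with h | h <;>
    simp [Nat.add_mod, h]

lemma tm_pair (j : ℕ) : thueMorse (2 * j) ≠ thueMorse (2 * j + 1) := by
  rw [tm_even, tm_odd]
  cases thueMorse j <;> simp

lemma tm_four (j : ℕ) : thueMorse (4 * j + 1) = thueMorse (4 * j + 2) := by
  rw [show 4 * j + 1 = 2 * (2 * j) + 1 by ring, show 4 * j + 2 = 2 * (2 * j + 1) by ring,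
    tm_odd, tm_even, tm_even, tm_odd]

lemma tm_key : ∀ n : ℕ, 1 ≤ n → ∀ i : ℕ,
    ∃ k, k < 2 * n ∧ thueMorse (i + k) ≠ thueMorse (i + n + k) := by
  intro n
  induction n using Nat.strong_induction_on with
  | _ n IH =>
    intro hn i
    by_contra hcon
    push_neg at hcon
    have hc' : ∀ a, i ≤ a → a < i + 2 * n → thueMorse a = thueMorse (a + n) := by
      intro a ha1 ha2
      have := hcon (a - i) (by omega)
      rwa [show i + (a - i) = a by omega, show i + n + (a - i) = a + n by omega] at this
    rcases Nat.even_or_odd n with ⟨m, hm⟩ | ⟨m, hm⟩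
    · -- even case: n = m + m, reduce to a cube of period m
      obtain ⟨k, hk, hne⟩ := IH m (by omega) (by omega) ((i + 1) / 2)
      apply hne
      rw [← tm_even ((i + 1) / 2 + k),
        hc' (2 * ((i + 1) / 2 + k)) (by omega) (by omega),
        show 2 * ((i + 1) / 2 + k) + n = 2 * ((i + 1) / 2 + m + k) by omega,
        tm_even]
    · -- odd case: n = 2 * m + 1
      rcases Nat.eq_zero_or_pos m with hm0 | hm1
      · -- n = 1
        rcases Nat.even_or_odd i with ⟨j, hj⟩ | ⟨j, hj⟩
        · apply tm_pair j
          have := hc' (2 * j) (by omega) (by omega)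
          rwa [show 2 * j + n = 2 * j + 1 by omega] at this
        · apply tm_pair (j + 1)
          have := hc' (2 * (j + 1)) (by omega) (by omega)
          rwa [show 2 * (j + 1) + n = 2 * (j + 1) + 1 by omega] at this
      · -- n ≥ 3 odd
        set q := (i + 2) / 4 with hqdef
        have ha := hc' (4 * q + 1) (by omega) (by omega)
        have hb := hc' (4 * q + 2) (by omega) (by omega)
        apply tm_pair (2 * q + m + 1)
        rw [show 2 * (2 * q + m + 1) + 1 = 4 * q + 2 + n by omega,
          show 2 * (2 * q + m + 1) = 4 * q + 1 + n by omega,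
          ← ha, ← hb]
        exact tm_four q

/-- The Thue–Morse sequence is cube-free. -/
theorem thueMorse_cubeFree :
    ∀ i : ℕ, ∀ n : ℕ, 1 ≤ n → ∃ k < 2 * n, thueMorse (i + k) ≠ thueMorse (i + n + k) := by
  intro i n hn
  obtain ⟨k, h1, h2⟩ := tm_key n hn i
  exact ⟨k, h1, h2⟩
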